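/- arXiv:1704.06710 — 3 statements merged into one kernel-verified Lean document; each statement's English description precedes it below -/
import Mathlib

section
/- If σ ∈ {±1}^n is a vector of 4-wise independent uniform random signs and v ∈ ℝ^n is a fixed nonzero vector, then P(⟨σ, v⟩² ≥ (2/3)‖v‖₂²) ≥ 1/27. -/
/-!
Write `S = ⟨σ, v⟩` and `A = ‖v‖₂²`. Since `σᵢ² = 1`, a product of at most four signs has mean `1`
when its indices pair up and mean `0` otherwise, as 4-wise independence makes any unpaired sign
factor off with mean zero. Hence `E S² = A` and `E S⁴ = 3A² - 2∑ vᵢ⁴ ≤ 3A²`, and the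
Paley–Zygmund inequality for `X = S²` with `θ = 2/3` gives
`P(X ≥ 2A/3) ≥ (1/3)² (E X)² / E X² ≥ 1/27`.
-/

open MeasureTheory ProbabilityTheory

/-- The distribution of a uniform random sign in `{−1, +1}`. -/
noncomputable def signMeasure : Measure ℝ :=
  ((1 : ENNReal) / 2) • Measure.dirac (1 : ℝ) + ((1 : ENNReal) / 2) • Measure.dirac (-1 : ℝ)

section

variable {Ω : Type*} [MeasurableSpace Ω] {μ : Measure Ω}

theorem sq_integral_le_measureReal_univ_mul_integral_sq [IsFiniteMeasure μ] {f : Ω → ℝ}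
    (hf : MemLp f 2 μ) : (∫ ω, f ω ∂μ) ^ 2 ≤ μ.real Set.univ * ∫ ω, f ω ^ 2 ∂μ := by
  have hf1 : Integrable f μ := hf.integrable one_le_two
  have hf2 : Integrable (fun ω => f ω ^ 2) μ := hf.integrable_sq
  have hquad : ∀ t : ℝ,
      0 ≤ μ.real Set.univ * (t * t) + (-2 * ∫ ω, f ω ∂μ) * t + ∫ ω, f ω ^ 2 ∂μ := by
    intro t
    have hexp : ∫ ω, (f ω - t) ^ 2 ∂μ
        = ∫ ω, f ω ^ 2 ∂μ - 2 * t * ∫ ω, f ω ∂μ + μ.real Set.univ * (t * t) := by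
      simp_rw [show ∀ ω, (f ω - t) ^ 2 = f ω ^ 2 - 2 * t * f ω + t * t from fun ω => by ring]
      rw [integral_add (f := fun ω => f ω ^ 2 - 2 * t * f ω) (hf2.sub (hf1.const_mul _))
          (integrable_const _),
        integral_sub hf2 (hf1.const_mul _), integral_const_mul, integral_const, smul_eq_mul]
    have hnonneg : 0 ≤ ∫ ω, (f ω - t) ^ 2 ∂μ := integral_nonneg fun ω => sq_nonneg _
    linarith
  have := discrim_le_zero hquad
  rw [discrim] at this
  linarith

theorem paley_zygmund [IsProbabilityMeasure μ] {X : Ω → ℝ} (hX0 : 0 ≤ᵐ[μ] X) (hX : MemLp X 2 μ)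
    {θ : ℝ} (hθ0 : 0 ≤ θ) (hθ1 : θ ≤ 1) :
    (1 - θ) ^ 2 * (∫ ω, X ω ∂μ) ^ 2
      ≤ μ.real {ω | θ * ∫ ω, X ω ∂μ ≤ X ω} * ∫ ω, X ω ^ 2 ∂μ := by
  set c := ∫ ω, X ω ∂μ
  set E := {ω | θ * c ≤ X ω}
  have hc : 0 ≤ c := integral_nonneg_of_ae hX0
  have hXi : Integrable X μ := hX.integrable one_le_two
  have hE : NullMeasurableSet E μ := nullMeasurableSet_le aemeasurable_const hX.1.aemeasurable
  have hcompl : ∫ ω in Eᶜ, X ω ∂μ ≤ θ * c := calc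
    ∫ ω in Eᶜ, X ω ∂μ ≤ ∫ ω in Eᶜ, θ * c ∂μ := by
      refine setIntegral_mono_ae_restrict hXi.integrableOn (integrable_const _).integrableOn ?_
      filter_upwards [ae_restrict_mem₀ hE.compl] with ω hω
      exact (not_le.mp (show ¬θ * c ≤ X ω from hω)).le
    _ = μ.real Eᶜ * (θ * c) := by rw [setIntegral_const, smul_eq_mul]
    _ ≤ θ * c := mul_le_of_le_one_left (by positivity) measureReal_le_one
  have hmass : (1 - θ) * c ≤ ∫ ω in E, X ω ∂μ := by
    have := integral_add_compl₀ hE hXi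
    linarith
  calc (1 - θ) ^ 2 * c ^ 2 = ((1 - θ) * c) ^ 2 := by ring
    _ ≤ (∫ ω in E, X ω ∂μ) ^ 2 := pow_le_pow_left₀ (by nlinarith) hmass 2
    _ ≤ (μ.restrict E).real Set.univ * ∫ ω in E, X ω ^ 2 ∂μ :=
      sq_integral_le_measureReal_univ_mul_integral_sq (hX.restrict E)
    _ ≤ μ.real E * ∫ ω, X ω ^ 2 ∂μ := by
      rw [measureReal_restrict_apply_univ]
      exact mul_le_mul_of_nonneg_left
        (setIntegral_le_integral hX.integrable_sq (ae_of_all _ fun ω => sq_nonneg _))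
        measureReal_nonneg

variable {ι : Type*} {σ : Ω → ι → ℝ}

theorem integral_prod_eq_zero_of_iIndepFun (hmeas : ∀ i, Measurable fun ω => σ ω i)
    (hmean : ∀ i, ∫ ω, σ ω i ∂μ = 0) {t : Finset ι} (ht : t.Nonempty)
    (hindep : iIndepFun (fun (i : t) ω => σ ω i) μ) :
    ∫ ω, ∏ i ∈ t, σ ω i ∂μ = 0 := by
  obtain ⟨j, hj⟩ := ht
  have := hindep.integral_fun_prod_eq_prod_integral fun i => (hmeas i).aestronglyMeasurable
  simp only [Finset.prod_coe_sort] at this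
  rw [this]
  exact Finset.prod_eq_zero (Finset.mem_univ ⟨j, hj⟩) (hmean j)

theorem integral_sq_sum_mul [Fintype ι] (hmeas : ∀ i, Measurable fun ω => σ ω i)
    (hsign : ∀ ω i, σ ω i = 1 ∨ σ ω i = -1) (v : ι → ℝ) {g : Ω → ℝ} (hg : Integrable g μ) :
    ∫ ω, (∑ i, σ ω i * v i) ^ 2 * g ω ∂μ = ∑ i, ∑ j, v i * v j * ∫ ω, σ ω i * σ ω j * g ω ∂μ := by
  have hint (i j : ι) : Integrable (fun ω => v i * v j * (σ ω i * σ ω j * g ω)) μ := by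
    refine (hg.bdd_mul (c := 1) (by fun_prop) (ae_of_all _ fun ω => ?_)).const_mul _
    simp [(abs_eq zero_le_one).mpr (hsign ω i), (abs_eq zero_le_one).mpr (hsign ω j)]
  have hexpand (ω : Ω) : (∑ i, σ ω i * v i) ^ 2 * g ω
      = ∑ i, ∑ j, v i * v j * (σ ω i * σ ω j * g ω) := by
    rw [sq, Finset.sum_mul_sum, Finset.sum_mul]
    refine Finset.sum_congr rfl fun i _ => ?_
    rw [Finset.sum_mul]
    exact Finset.sum_congr rfl fun j _ => by ring
  simp_rw [hexpand]
  rw [integral_finsetSum _ fun i _ => integrable_finsetSum _ fun j _ => hint i j]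
  refine Finset.sum_congr rfl fun i _ => ?_
  rw [integral_finsetSum _ fun j _ => hint i j]
  simp_rw [integral_const_mul]

theorem memLp_sq_sum [Fintype ι] [IsFiniteMeasure μ] (hmeas : ∀ i, Measurable fun ω => σ ω i)
    (hsign : ∀ ω i, σ ω i = 1 ∨ σ ω i = -1) (v : ι → ℝ) (p : ENNReal) :
    MemLp (fun ω => (∑ i, σ ω i * v i) ^ 2) p μ := by
  refine MemLp.of_bound (by fun_prop) ((∑ i, |v i|) ^ 2) (ae_of_all _ fun ω => ?_)
  have habs (i : ι) : |σ ω i * v i| = |v i| := by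
    rw [abs_mul, (abs_eq zero_le_one).mpr (hsign ω i), one_mul]
  rw [norm_pow, Real.norm_eq_abs]
  gcongr
  exact (Finset.abs_sum_le_sum_abs _ _).trans_eq (Finset.sum_congr rfl fun i _ => habs i)

variable [IsProbabilityMeasure μ] [DecidableEq ι]
  (hsign : ∀ ω i, σ ω i = 1 ∨ σ ω i = -1)
  (hprod : ∀ t : Finset ι, t.Nonempty → t.card ≤ 4 → ∫ ω, ∏ i ∈ t, σ ω i ∂μ = 0)
include hsign hprod

theorem integral_sign_mul_sign (i j : ι) : ∫ ω, σ ω i * σ ω j ∂μ = if i = j then 1 else 0 := by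
  split_ifs with h
  · subst h
    simp [mul_self_eq_one_iff.mpr (hsign _ i)]
  · simpa [Finset.prod_pair h] using
      hprod {i, j} (Finset.insert_nonempty _ _) (Finset.card_le_two.trans (by norm_num))

/-- `σᵢσⱼσₖσₗ` has mean `1` exactly when its indices pair up; the last term corrects the
triple count of the case `i = j = k = l`. -/
theorem integral_sign_mul_sign_mul_sign_mul_sign (i j k l : ι) :
    ∫ ω, σ ω i * σ ω j * σ ω k * σ ω l ∂μ =
      (if i = j then 1 else 0) * (if k = l then 1 else 0)
        + (if i = k then 1 else 0) * (if j = l then 1 else 0)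
        + (if i = l then 1 else 0) * (if j = k then 1 else 0)
        - 2 * (if i = j ∧ j = k ∧ k = l then 1 else 0) := by
  have hsq (ω : Ω) (a : ι) : σ ω a * σ ω a = 1 := mul_self_eq_one_iff.mpr (hsign ω a)
  have hpair (a b : ι) (h : ∀ ω, σ ω i * σ ω j * σ ω k * σ ω l = σ ω a * σ ω b) :
      ∫ ω, σ ω i * σ ω j * σ ω k * σ ω l ∂μ = if a = b then 1 else 0 := by
    simp_rw [h]
    exact integral_sign_mul_sign hsign hprod a b
  by_cases hij : i = j
  · subst hij
    rw [hpair k l fun ω => by linear_combination (σ ω k * σ ω l) * hsq ω i]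
    grind
  by_cases hik : i = k
  · subst hik
    rw [hpair j l fun ω => by linear_combination (σ ω j * σ ω l) * hsq ω i]
    grind
  by_cases hil : i = l
  · subst hil
    rw [hpair j k fun ω => by linear_combination (σ ω j * σ ω k) * hsq ω i]
    grind
  have hunpaired : ∫ ω, σ ω i * σ ω j * σ ω k * σ ω l ∂μ = 0 := by
    by_cases hjk : j = k
    · subst hjk
      rw [hpair i l fun ω => by linear_combination (σ ω i * σ ω l) * hsq ω j, if_neg hil]
    by_cases hjl : j = l
    · subst hjl
      rw [hpair i k fun ω => by linear_combination (σ ω i * σ ω k) * hsq ω j, if_neg hik]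
    by_cases hkl : k = l
    · subst hkl
      rw [hpair i j fun ω => by linear_combination (σ ω i * σ ω j) * hsq ω k, if_neg hij]
    simpa [Finset.prod_insert, Finset.prod_pair, hij, hik, hil, hjk, hjl, hkl, mul_assoc] using
      hprod {i, j, k, l} (Finset.insert_nonempty _ _) Finset.card_le_four
  grind

variable [Fintype ι] (hmeas : ∀ i, Measurable fun ω => σ ω i)
include hmeas

theorem integral_sq_sum (v : ι → ℝ) : ∫ ω, (∑ i, σ ω i * v i) ^ 2 ∂μ = ∑ i, v i ^ 2 := by
  simpa [integral_sign_mul_sign hsign hprod, sq] using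
    integral_sq_sum_mul hmeas hsign v (integrable_const (μ := μ) (1 : ℝ))

theorem integral_pow_four_sum (v : ι → ℝ) :
    ∫ ω, (∑ i, σ ω i * v i) ^ 4 ∂μ = 3 * (∑ i, v i ^ 2) ^ 2 - 2 * ∑ i, v i ^ 4 := by
  have hmoment (i j : ι) : ∫ ω, σ ω i * σ ω j * (∑ i, σ ω i * v i) ^ 2 ∂μ
      = ∑ k, ∑ l, v k * v l * ∫ ω, σ ω i * σ ω j * σ ω k * σ ω l ∂μ := by
    have hint : Integrable (fun ω => σ ω i * σ ω j) μ := by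
      refine Integrable.of_bound (by fun_prop) 1 (ae_of_all _ fun ω => ?_)
      simp [(abs_eq zero_le_one).mpr (hsign ω i), (abs_eq zero_le_one).mpr (hsign ω j)]
    convert integral_sq_sum_mul hmeas hsign v hint using 1
    · simp_rw [mul_comm]
    · simp_rw [show ∀ ω k l, σ ω k * σ ω l * (σ ω i * σ ω j) = σ ω i * σ ω j * σ ω k * σ ω l
        from fun ω k l => by ring]
  calc ∫ ω, (∑ i, σ ω i * v i) ^ 4 ∂μ
      = ∫ ω, (∑ i, σ ω i * v i) ^ 2 * (∑ i, σ ω i * v i) ^ 2 ∂μ := by ring_nf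
    _ = ∑ i, ∑ j, v i * v j * ∑ k, ∑ l, v k * v l * ∫ ω, σ ω i * σ ω j * σ ω k * σ ω l ∂μ := by
      rw [integral_sq_sum_mul hmeas hsign v
        ((memLp_sq_sum hmeas hsign v 1).integrable le_rfl)]
      simp_rw [hmoment]
    _ = 3 * (∑ i, v i ^ 2) ^ 2 - 2 * ∑ i, v i ^ 4 := by
      simp_rw [integral_sign_mul_sign_mul_sign_mul_sign hsign hprod]
      simp only [mul_ite, mul_one, mul_zero, ite_and, mul_sub, mul_add, Finset.sum_sub_distrib,
        Finset.sum_add_distrib, Finset.sum_ite_eq, Finset.mem_univ, ↓reduceIte,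
        Finset.sum_ite_irrel, Finset.sum_const_zero, Finset.mul_sum]
      rw [sq (∑ i, v i ^ 2), Finset.sum_mul_sum]
      ring_nf

end

theorem integral_id_signMeasure : ∫ x, x ∂signMeasure = 0 := by
  rw [signMeasure, integral_add_measure, integral_smul_measure, integral_smul_measure,
    integral_dirac, integral_dirac]
  · norm_num
  all_goals exact (integrable_dirac (by simp)).smul_measure (by simp)

/-- For 4-wise independent uniform signs `σ` and a fixed nonzero vector `v`,
`P(⟨σ,v⟩² ≥ (2/3)‖v‖₂²) ≥ 1/27`. -/
theorem stmt_6 {Ω : Type*} [MeasurableSpace Ω] (μ : Measure Ω) (hμ : IsProbabilityMeasure μ)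
    (n : ℕ) (σ : Ω → Fin n → ℝ)
    (hmeas : ∀ i, Measurable fun ω => σ ω i)
    (hsign : ∀ ω i, σ ω i = 1 ∨ σ ω i = -1)
    (hunif : ∀ i, Measure.map (fun ω => σ ω i) μ = signMeasure)
    (hindep : ∀ s : Finset (Fin n), s.card ≤ 4 →
      iIndepFun (m := fun _ : s => (inferInstance : MeasurableSpace ℝ))
        (fun (i : s) (ω : Ω) => σ ω (i : Fin n)) μ)
    (v : Fin n → ℝ) (hv : v ≠ 0) :
    (1 : ℝ) / 27 ≤ (μ {ω | 2 / 3 * ∑ i, v i ^ 2 ≤ (∑ i, σ ω i * v i) ^ 2}).toReal := by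
  have hmean (i : Fin n) : ∫ ω, σ ω i ∂μ = 0 := by
    rw [← integral_id_signMeasure, ← hunif i]
    exact (integral_map (hmeas i).aemeasurable aestronglyMeasurable_id).symm
  have hprod (t : Finset (Fin n)) (ht : t.Nonempty) (hcard : t.card ≤ 4) :
      ∫ ω, ∏ i ∈ t, σ ω i ∂μ = 0 :=
    integral_prod_eq_zero_of_iIndepFun hmeas hmean ht (hindep t hcard)
  set A := ∑ i, v i ^ 2
  have hA : 0 < A := by
    obtain ⟨i, hi⟩ := Function.ne_iff.mp hv
    exact Finset.sum_pos' (fun j _ => sq_nonneg _) ⟨i, Finset.mem_univ _, sq_pos_of_ne_zero hi⟩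
  have hfourth : ∫ ω, ((∑ i, σ ω i * v i) ^ 2) ^ 2 ∂μ ≤ 3 * A ^ 2 := by
    simp_rw [← pow_mul]
    rw [integral_pow_four_sum hsign hprod hmeas v]
    have : 0 ≤ ∑ i, v i ^ 4 := Finset.sum_nonneg fun i _ => by positivity
    linarith
  have hpz := paley_zygmund (ae_of_all μ fun ω => sq_nonneg (∑ i, σ ω i * v i))
    (memLp_sq_sum hmeas hsign v 2) (θ := 2 / 3) (by norm_num) (by norm_num)
  rw [integral_sq_sum hsign hprod hmeas v] at hpz
  refine le_of_mul_le_mul_right ?_ (by positivity : 0 < 3 * A ^ 2)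
  calc 1 / 27 * (3 * A ^ 2) = (1 - 2 / 3) ^ 2 * A ^ 2 := by ring
    _ ≤ μ.real {ω | 2 / 3 * A ≤ (∑ i, σ ω i * v i) ^ 2}
          * ∫ ω, ((∑ i, σ ω i * v i) ^ 2) ^ 2 ∂μ := hpz
    _ ≤ μ.real {ω | 2 / 3 * A ≤ (∑ i, σ ω i * v i) ^ 2} * (3 * A ^ 2) := by gcongr
end

section
/- Doob-type maximal inequality for Rademacher chaos over monotone vector sequences (Theorem 3.4 of the paper, fully independent case): if 0 ⪯ v^(1) ⪯ v^(2) ⪯ ... ⪯ v^(m) are vectors in ℝ^n and σ ∈ {±1}^n is a vector of independent uniform random signs, then there is a universal constant C such that for all λ > 0, P(sup_{i ≤ m} |⟨σ, v^(i)⟩| > λ ‖v^(m)‖₂) < C/λ². -/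
/-!
Write `Sᵢ = ⟨σ, v⁽ⁱ⁾⟩` and `tᵢ = ‖v⁽ⁱ⁾‖²`. Since `0 ⪯ v⁽ᵏ⁾ ⪯ v⁽ˡ⁾`, the increment satisfies
`‖v⁽ˡ⁾ - v⁽ᵏ⁾‖² ≤ tₗ - tₖ`, so the fourth-moment Khintchine bound `E⟨σ, a⟩⁴ ≤ 3‖a‖⁴` gives
`E (Sₗ - Sₖ)⁴ ≤ 3 (tₗ - tₖ)²`. Because `t` is monotone and the exponent `2` exceeds `1`,
Móricz's bisection argument turns these increment bounds into `E maxᵢ Sᵢ⁴ ≤ 1221 ‖v⁽ᵐ⁾‖⁴`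
with no logarithmic loss in `m`. Markov's inequality for the fourth power bounds the
probability by `1221 / λ⁴`, and together with the trivial bound `1` this is below `1221 / λ²`.
-/

open MeasureTheory ProbabilityTheory

open Finset Matrix

/-- Convexity of `z ↦ z⁴` at `x + y = ¼ (4x) + ¾ (4y/3)`. -/
theorem add_pow_four_le (x y : ℝ) : (x + y) ^ 4 ≤ 64 * x ^ 4 + 64 / 27 * y ^ 4 := by
  nlinarith [sq_nonneg (y - 3 * x), sq_nonneg (y + 3 * x), sq_nonneg (x * y),
    sq_nonneg (y ^ 2 - 9 * x ^ 2), sq_nonneg (x * y - 3 * x ^ 2), sq_nonneg (x * y + 3 * x ^ 2),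
    sq_nonneg x, sq_nonneg y, sq_nonneg (x + y), sq_nonneg (x - y)]

theorem exists_bisection_of_monotone {t : ℕ → ℝ} (ht : Monotone t) {k l : ℕ} (hkl : k < l) :
    ∃ j, k ≤ j ∧ j < l ∧ t j - t k ≤ (t l - t k) / 2 ∧ t l - t (j + 1) ≤ (t l - t k) / 2 := by
  set P : ℕ → Prop := fun i => t i - t k ≤ (t l - t k) / 2
  have hPk : P k := by simp only [P, sub_self]; linarith [ht hkl.le]
  refine ⟨Nat.findGreatest P (l - 1), Nat.le_findGreatest (by omega) hPk,
    by have := Nat.findGreatest_le (P := P) (l - 1); omega,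
    Nat.findGreatest_spec (P := P) (m := k) (by omega) hPk, ?_⟩
  rcases (Nat.findGreatest_le (P := P) (l - 1)).eq_or_lt with hj | hj
  · rw [hj, Nat.sub_add_cancel (by omega), sub_self]; linarith [ht hkl.le]
  · have := Nat.findGreatest_is_greatest (P := P) (n := l - 1) (lt_add_one _) (by omega)
    simp only [P, not_le] at this
    linarith

/- Móricz's maximal inequality. The bisection splits `[k, l]` into `[k, j]` and `[j+1, l]`, both
with `t`-increment at most `δ/2`, `δ = tₗ - tₖ`; the recursion closes because
`407/4 + 64 + (64/27)(407/4) ≤ 407`. -/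
theorem exists_majorant_pow_four_sub_of_moment_le {α : Type*} (E : (α → ℝ) →ₗ[ℝ] ℝ)
    {S : ℕ → α → ℝ} {t : ℕ → ℝ} {A : ℝ} (ht : Monotone t) (hA : 0 ≤ A)
    (hmom : ∀ k l, k ≤ l → E ((S l - S k) ^ 4) ≤ A * (t l - t k) ^ 2) (k l : ℕ) :
    ∃ M : α → ℝ, (∀ i ∈ Icc k l, (S i - S k) ^ 4 ≤ M) ∧ E M ≤ 407 * A * (t l - t k) ^ 2 := by
  induction hd : l - k using Nat.strong_induction_on generalizing k l with
  | _ d ih =>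
  rcases le_or_gt l k with hlk | hkl
  · refine ⟨0, fun i hi => ?_, by rw [map_zero]; positivity⟩
    obtain rfl : i = k := by rw [mem_Icc] at hi; omega
    simp
  obtain ⟨j, hkj, hjl, htj, htj₁⟩ := exists_bisection_of_monotone ht hkl
  set δ := t l - t k
  obtain ⟨M₁, hM₁, hEM₁⟩ := ih (j - k) (by omega) k j rfl
  obtain ⟨M₂, hM₂, hEM₂⟩ := ih (l - (j + 1)) (by omega) (j + 1) l rfl
  refine ⟨M₁ + (64 : ℝ) • (S (j + 1) - S k) ^ 4 + (64 / 27 : ℝ) • M₂, fun i hi x => ?_, ?_⟩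
  · have hM₁x : 0 ≤ M₁ x := by simpa using hM₁ k (by simp [hkj]) x
    have hM₂x : 0 ≤ M₂ x := by simpa using hM₂ (j + 1) (by simp; omega) x
    simp only [Pi.add_apply, Pi.smul_apply, Pi.pow_apply, Pi.sub_apply, smul_eq_mul]
    rcases le_or_gt i j with hij | hij
    · have := hM₁ i (mem_Icc.2 ⟨(mem_Icc.1 hi).1, hij⟩) x
      simp only [Pi.pow_apply, Pi.sub_apply] at this
      nlinarith [pow_two_nonneg ((S (j + 1) x - S k x) ^ 2)]
    · have := hM₂ i (mem_Icc.2 ⟨hij, (mem_Icc.1 hi).2⟩) x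
      simp only [Pi.pow_apply, Pi.sub_apply] at this
      have := add_pow_four_le (S (j + 1) x - S k x) (S i x - S (j + 1) x)
      rw [show S (j + 1) x - S k x + (S i x - S (j + 1) x) = S i x - S k x by ring] at this
      linarith
  · rw [map_add, map_add, map_smul, map_smul, smul_eq_mul, smul_eq_mul]
    have hmid := hmom k (j + 1) (by omega)
    have h₁ : 0 ≤ t j - t k := sub_nonneg.2 (ht hkj)
    have h₂ : 0 ≤ t (j + 1) - t k := sub_nonneg.2 (ht (by omega))
    have h₃ : 0 ≤ t l - t (j + 1) := sub_nonneg.2 (ht hjl)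
    have e₁ : (t j - t k) ^ 2 ≤ δ ^ 2 / 4 := by nlinarith
    have e₂ : (t (j + 1) - t k) ^ 2 ≤ δ ^ 2 := by nlinarith
    have e₃ : (t l - t (j + 1)) ^ 2 ≤ δ ^ 2 / 4 := by nlinarith
    nlinarith [mul_le_mul_of_nonneg_left e₁ hA, mul_le_mul_of_nonneg_left e₂ hA,
      mul_le_mul_of_nonneg_left e₃ hA]

theorem sum_sub_sq_le_sub_sum_sq {ι : Type*} [Fintype ι] {a b : ι → ℝ} (ha : 0 ≤ a)
    (hab : a ≤ b) : ∑ j, (b j - a j) ^ 2 ≤ ∑ j, b j ^ 2 - ∑ j, a j ^ 2 := by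
  rw [← sum_sub_distrib]
  exact sum_le_sum fun j _ => by nlinarith [mul_nonneg (ha j) (sub_nonneg.2 (hab j))]

theorem card_filter_mul_lt_sum {α : Type*} [Fintype α] {p : α → Prop} [DecidablePred p]
    {f : α → ℝ} {c : ℝ} (hf : 0 ≤ f) (hp : ∃ x, p x) (h : ∀ x, p x → c < f x) :
    #{x | p x} * c < ∑ x, f x := by
  obtain ⟨x, hx⟩ := hp
  calc #{x | p x} * c = ∑ x ∈ {x | p x}, c := by rw [sum_const, nsmul_eq_mul]
    _ < ∑ x ∈ {x | p x}, f x :=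
      sum_lt_sum_of_nonempty ⟨x, by simpa using hx⟩ fun x hx => h x (by simpa using hx)
    _ ≤ ∑ x, f x := sum_le_univ_sum_of_nonneg hf

theorem lt_div_sq_of_mul_pow_four_lt {p l K : ℝ} (hl : 0 < l) (hp : p ≤ 1) (hK : 1 ≤ K)
    (h : p * l ^ 4 < K) : p < K / l ^ 2 := by
  rw [lt_div_iff₀ (by positivity)]
  rcases le_or_gt 1 l with h1 | h1
  · nlinarith [pow_le_pow_right₀ h1 (show 2 ≤ 4 by norm_num), mul_pos hl hl]
  · nlinarith [pow_lt_one₀ hl.le h1 (show 2 ≠ 0 by norm_num)]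

section Rademacher

variable {n : ℕ}

def signVec (s : Fin n → Bool) : Fin n → ℝ := fun j => if s j then 1 else -1

theorem sum_signVec_succ (f : ℝ → ℝ) (a : Fin (n + 1) → ℝ) :
    ∑ s : Fin (n + 1) → Bool, f (signVec s ⬝ᵥ a) =
      ∑ s : Fin n → Bool,
        (f (signVec s ⬝ᵥ Fin.tail a + a 0) + f (signVec s ⬝ᵥ Fin.tail a - a 0)) := by
  rw [← (Fin.consEquiv fun _ => Bool).sum_comp, Fintype.sum_prod_type, Fintype.sum_bool,
    ← sum_add_distrib]
  refine sum_congr rfl fun s _ => ?_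
  simp [signVec, dotProduct, Fin.sum_univ_succ, Fin.tail, sub_eq_add_neg, add_comm]

theorem sum_signVec_dotProduct_sq (a : Fin n → ℝ) :
    ∑ s : Fin n → Bool, (signVec s ⬝ᵥ a) ^ 2 = 2 ^ n * ∑ j, a j ^ 2 := by
  induction n with
  | zero => simp
  | succ n ih =>
    rw [sum_signVec_succ (· ^ 2), Fin.sum_univ_succ]
    calc ∑ s : Fin n → Bool,
          ((signVec s ⬝ᵥ Fin.tail a + a 0) ^ 2 + (signVec s ⬝ᵥ Fin.tail a - a 0) ^ 2)
        = ∑ s : Fin n → Bool, (2 * (signVec s ⬝ᵥ Fin.tail a) ^ 2 + 2 * a 0 ^ 2) :=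
          sum_congr rfl fun s _ => by ring
      _ = 2 ^ (n + 1) * (a 0 ^ 2 + ∑ j : Fin n, a j.succ ^ 2) := by
          rw [sum_add_distrib, ← mul_sum, ih]
          simp [Fin.tail]
          ring

theorem sum_signVec_dotProduct_pow_four_le (a : Fin n → ℝ) :
    ∑ s : Fin n → Bool, (signVec s ⬝ᵥ a) ^ 4 ≤ 3 * 2 ^ n * (∑ j, a j ^ 2) ^ 2 := by
  induction n with
  | zero => simp
  | succ n ih =>
    rw [sum_signVec_succ (· ^ 4), Fin.sum_univ_succ]
    calc ∑ s : Fin n → Bool,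
          ((signVec s ⬝ᵥ Fin.tail a + a 0) ^ 4 + (signVec s ⬝ᵥ Fin.tail a - a 0) ^ 4)
        = ∑ s : Fin n → Bool, (2 * (signVec s ⬝ᵥ Fin.tail a) ^ 4
            + 12 * a 0 ^ 2 * (signVec s ⬝ᵥ Fin.tail a) ^ 2 + 2 * a 0 ^ 4) :=
          sum_congr rfl fun s _ => by ring
      _ = 2 * ∑ s : Fin n → Bool, (signVec s ⬝ᵥ Fin.tail a) ^ 4
            + 12 * a 0 ^ 2 * ∑ s : Fin n → Bool, (signVec s ⬝ᵥ Fin.tail a) ^ 2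
            + 2 ^ (n + 1) * a 0 ^ 4 := by
          simp only [sum_add_distrib, ← mul_sum, sum_const, card_univ, Fintype.card_fun,
            Fintype.card_bool, Fintype.card_fin, nsmul_eq_mul]
          push_cast; ring
      _ ≤ 3 * 2 ^ (n + 1) * (a 0 ^ 2 + ∑ j, Fin.tail a j ^ 2) ^ 2 := by
          have hQ : 0 ≤ ∑ j, Fin.tail a j ^ 2 := sum_nonneg fun j _ => sq_nonneg _
          rw [sum_signVec_dotProduct_sq, pow_succ (2 : ℝ) n]
          nlinarith [ih (Fin.tail a), pow_nonneg (zero_le_two (α := ℝ)) n,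
            mul_nonneg (pow_nonneg (zero_le_two (α := ℝ)) n) (pow_nonneg (sq_nonneg (a 0)) 2)]

theorem signMeasure_apply {A : Set ℝ} (hA : MeasurableSet A) :
    signMeasure A = 2⁻¹ * ∑ b : Bool, A.indicator 1 (if b then 1 else -1) := by
  simp [signMeasure, Measure.dirac_apply' _ hA, mul_add]

instance : IsProbabilityMeasure signMeasure :=
  ⟨by simp [signMeasure_apply MeasurableSet.univ, ENNReal.inv_mul_cancel]⟩

theorem pi_signMeasure :
    Measure.pi (fun _ : Fin n => signMeasure) =
      ((2 : ENNReal) ^ n)⁻¹ • ∑ s : Fin n → Bool, Measure.dirac (signVec s) := by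
  refine Measure.pi_eq fun A hA => ?_
  simp only [signMeasure_apply (hA _), prod_mul_distrib, prod_const, card_univ,
    Fintype.card_fin, ENNReal.inv_pow, prod_univ_sum, Fintype.piFinset_univ, Measure.smul_apply,
    Measure.coe_finsetSum, Finset.sum_apply, smul_eq_mul,
    Measure.dirac_apply' _ (MeasurableSet.univ_pi hA)]
  congr 1
  refine sum_congr rfl fun s _ => ?_
  simpa [signVec] using Set.indicator_pi_one_apply (M₀ := ENNReal) univ A (signVec s)

open Classical in
theorem pi_signMeasure_apply {B : Set (Fin n → ℝ)} (hB : MeasurableSet B) :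
    (Measure.pi (fun _ : Fin n => signMeasure) B).toReal = #{s | signVec s ∈ B} / 2 ^ n := by
  rw [pi_signMeasure, Measure.smul_apply, Measure.coe_finsetSum, Finset.sum_apply]
  simp [Measure.dirac_apply' _ hB, Set.indicator_apply, div_eq_inv_mul]

theorem exists_majorant_signVec_dotProduct_pow_four {u : ℕ → Fin n → ℝ} (hu : Monotone u)
    (hu0 : u 0 = 0) (l : ℕ) :
    ∃ M : (Fin n → Bool) → ℝ, (∀ i ≤ l, ∀ s, (signVec s ⬝ᵥ u i) ^ 4 ≤ M s) ∧
      ∑ s, M s ≤ 1221 * 2 ^ n * (∑ j, u l j ^ 2) ^ 2 := by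
  have hnonneg : ∀ i, 0 ≤ u i := fun i => hu0 ▸ hu (Nat.zero_le i)
  have hincr : ∀ {k l}, k ≤ l → ∑ j, (u l j - u k j) ^ 2 ≤ ∑ j, u l j ^ 2 - ∑ j, u k j ^ 2 :=
    fun hkl => sum_sub_sq_le_sub_sum_sq (hnonneg _) (hu hkl)
  have ht : Monotone fun i => ∑ j, u i j ^ 2 := fun k l hkl =>
    sub_nonneg.1 ((sum_nonneg fun j _ => sq_nonneg _).trans (hincr hkl))
  have hmom : ∀ k l, k ≤ l → ∑ s : Fin n → Bool, (signVec s ⬝ᵥ u l - signVec s ⬝ᵥ u k) ^ 4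
      ≤ 3 * 2 ^ n * (∑ j, u l j ^ 2 - ∑ j, u k j ^ 2) ^ 2 := fun k l hkl => by
    simp only [← dotProduct_sub]
    exact (sum_signVec_dotProduct_pow_four_le _).trans (mul_le_mul_of_nonneg_left
      (pow_le_pow_left₀ (sum_nonneg fun j _ => sq_nonneg _) (hincr hkl) 2) (by positivity))
  obtain ⟨M, hM, hEM⟩ := exists_majorant_pow_four_sub_of_moment_le (∑ s, LinearMap.proj s)
    (S := fun i s => signVec s ⬝ᵥ u i) (A := 3 * 2 ^ n) ht (by positivity) (by simpa using hmom) 0 l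
  refine ⟨M, fun i hi s => by simpa [hu0] using hM i (mem_Icc.2 ⟨Nat.zero_le _, hi⟩) s, ?_⟩
  calc ∑ s, M s = (∑ s, LinearMap.proj s) M := by simp
    _ ≤ 407 * (3 * 2 ^ n) * (∑ j, u l j ^ 2 - ∑ j, u 0 j ^ 2) ^ 2 := hEM
    _ = 1221 * 2 ^ n * (∑ j, u l j ^ 2) ^ 2 := by
      simp only [hu0, Pi.zero_apply, zero_pow two_ne_zero, sum_const_zero, sub_zero]; ring

open Classical in
theorem card_exists_lt_abs_signVec_dotProduct_div_mul_pow_four_lt {m : ℕ}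
    {v : Fin (m + 1) → Fin n → ℝ} (hv0 : 0 ≤ v 0) (hv : Monotone v) {l : ℝ} (hl : 0 < l) :
    (#{s | ∃ i, l * √(∑ j, v (Fin.last m) j ^ 2) < |signVec s ⬝ᵥ v i|} : ℝ) / 2 ^ n * l ^ 4
      < 1221 := by
  set T := ∑ j, v (Fin.last m) j ^ 2
  -- `u = (0, v⁽⁰⁾, …, v⁽ᵐ⁾, v⁽ᵐ⁾, …)`
  set u : ℕ → Fin n → ℝ := fun i => if i = 0 then 0 else v (Fin.clamp (i - 1) m)
  have hu : Monotone u := monotone_nat_of_le_succ fun i => by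
    rcases i with _ | i
    · simpa [u, show Fin.clamp 0 m = 0 from Fin.ext (Nat.zero_min m)] using hv0
    · simpa [u] using hv (Fin.clamp_monotone i.le_succ)
  have hu_succ : ∀ i : Fin (m + 1), u (i + 1) = v i := fun i => by
    simp [u, Fin.clamp, Nat.min_eq_left i.is_le]
  obtain ⟨M, hM, hMsum⟩ := exists_majorant_signVec_dotProduct_pow_four hu (by simp [u]) (m + 1)
  have hM0 : 0 ≤ M := fun s => by simpa [u] using hM 0 (Nat.zero_le _) s
  have hbad : ∀ s, (∃ i, l * √T < |signVec s ⬝ᵥ v i|) → l ^ 4 * T ^ 2 < M s := by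
    rintro s ⟨i, hi⟩
    have hT : √T ^ 4 = T ^ 2 := by
      rw [show 4 = 2 * 2 by rfl, pow_mul, Real.sq_sqrt (sum_nonneg fun j _ => sq_nonneg _)]
    calc l ^ 4 * T ^ 2 = (l * √T) ^ 4 := by rw [mul_pow, hT]
      _ < |signVec s ⬝ᵥ v i| ^ 4 := pow_lt_pow_left₀ hi (by positivity) (by norm_num)
      _ = (signVec s ⬝ᵥ u (i + 1)) ^ 4 := by rw [hu_succ, Even.pow_abs ⟨2, rfl⟩]
      _ ≤ M s := hM _ (by omega) s
  by_cases hne : ∃ s, ∃ i, l * √T < |signVec s ⬝ᵥ v i|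
  · have hT : ∑ j, u (m + 1) j ^ 2 = T := by simp only [T, ← hu_succ (Fin.last m), Fin.val_last]
    have key := (card_filter_mul_lt_sum hM0 hne hbad).trans_le (hT ▸ hMsum)
    rw [div_mul_eq_mul_div, div_lt_iff₀ (by positivity)]
    exact lt_of_mul_lt_mul_right (by linarith) (sq_nonneg T)
  · simp [filter_false_of_mem fun s _ => not_exists.2 fun i h => hne ⟨s, i, h⟩]

end Rademacher

/-- Doob-type maximal inequality for Rademacher linear forms over coordinatewise monotone
vector sequences: for i.i.d. uniform signs `σ` and `0 ⪯ v⁽¹⁾ ⪯ ⋯ ⪯ v⁽ᵐ⁾`,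
`P(sup_i |⟨σ, v⁽ⁱ⁾⟩| > λ‖v⁽ᵐ⁾‖₂) < C/λ²` for a universal constant `C`. -/
theorem stmt_10 :
    ∃ C > 0, ∀ (n m : ℕ) (Ω : Type) (_ : MeasurableSpace Ω) (μ : Measure Ω),
      IsProbabilityMeasure μ →
      ∀ σ : Ω → Fin n → ℝ, Measurable σ →
        Measure.map σ μ = Measure.pi (fun _ : Fin n => signMeasure) →
        ∀ v : Fin (m + 1) → Fin n → ℝ,
          (∀ j, 0 ≤ v 0 j) →
          (∀ k l : Fin (m + 1), k ≤ l → ∀ j, v k j ≤ v l j) →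
          ∀ l : ℝ, 0 < l →
            (μ {ω | ∃ i : Fin (m + 1),
                l * Real.sqrt (∑ j, v (Fin.last m) j ^ 2) < |∑ j, σ ω j * v i j|}).toReal
              < C / l ^ 2 := by
  refine ⟨1221, by norm_num, fun n m Ω _ μ _ σ hσ hmap v h0 hmon l hl => ?_⟩
  set B : Set (Fin n → ℝ) := {x | ∃ i, l * √(∑ j, v (Fin.last m) j ^ 2) < |x ⬝ᵥ v i|}
  have hB : MeasurableSet B := by
    simp only [B, Set.ofPred_exists]
    exact MeasurableSet.iUnion fun i => measurableSet_lt measurable_const (by fun_prop)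
  change (μ (σ ⁻¹' B)).toReal < _
  refine lt_div_sq_of_mul_pow_four_lt hl measureReal_le_one (by norm_num) ?_
  rw [← Measure.map_apply hσ hB, hmap, pi_signMeasure_apply hB]
  convert card_exists_lt_abs_signVec_dotProduct_div_mul_pow_four_lt h0 (fun a b h => hmon a b h) hl
    using 5
  ext; simp [B]
end

section
/- Interval decomposition bound for 0 < p ≤ 1: with the same greedy construction of t_1 < ... < t_{q+1} = m as above (threshold ε^{4/p}‖x^(m)‖_p), one has q ≤ ε^{−4/p}. -/
/-- The `ℓ_p` "norm" `(∑ i, |v i|^p)^(1/p)` of a vector in `ℝ^n`. -/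
noncomputable def lpNorm (p : ℝ) {n : ℕ} (v : Fin n → ℝ) : ℝ :=
  (∑ i, |v i| ^ p) ^ (1 / p)

/-!
Prepend `0` to the points `x (t 0) ≤ … ≤ x (t (q-1)) ≤ x m`; the `q` consecutive increments are
nonnegative vectors summing coordinatewise to at most `x m`, and each has `∑ |·|^p ≥ ε⁴ ‖x m‖_p^p`.
For `p ≤ 1` concavity of `a ↦ a^p` gives, in each coordinate, `∑ₖ aₖ^p ≤ q^(1-p) (∑ₖ aₖ)^p`, so
`q ε⁴ ‖x m‖_p^p ≤ q^(1-p) ‖x m‖_p^p`, i.e. `q^p ε⁴ ≤ 1`.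
-/

open Finset

theorem Fin.sum_univ_succ_sub_castSucc {M : Type*} [AddCommGroup M] :
    ∀ {q : ℕ} (f : Fin (q + 1) → M), ∑ i : Fin q, (f i.succ - f i.castSucc) = f (Fin.last q) - f 0
  | 0, f => by simp
  | r + 1, f => by
    rw [← Fin.succ_last, ← Fin.sum_Iic_sub (Fin.last r) f, ← Fin.top_eq_last, Iic_top]

theorem Real.sum_rpow_le_const_mul_rpow_sum_of_le_one {ι : Type*} (s : Finset ι) {f : ι → ℝ}
    {p : ℝ} (hp0 : 0 < p) (hp1 : p ≤ 1) (hf : ∀ i ∈ s, 0 ≤ f i) :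
    ∑ i ∈ s, f i ^ p ≤ (#s : ℝ) ^ (1 - p) * (∑ i ∈ s, f i) ^ p := by
  have hfp : ∀ i ∈ s, 0 ≤ f i ^ p := fun i hi => Real.rpow_nonneg (hf i hi) p
  have key := Real.rpow_sum_le_const_mul_sum_rpow_of_nonneg (s := s) (one_le_one_div hp0 hp1) hfp
  have hroot : ∀ i ∈ s, (f i ^ p) ^ (1 / p) = f i := fun i hi => by
    rw [← Real.rpow_mul (hf i hi), mul_one_div_cancel hp0.ne', Real.rpow_one]
  rw [sum_congr rfl hroot] at key
  have hsum : 0 ≤ ∑ i ∈ s, f i ^ p := sum_nonneg hfp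
  calc ∑ i ∈ s, f i ^ p = ((∑ i ∈ s, f i ^ p) ^ (1 / p)) ^ p := by
        rw [← Real.rpow_mul hsum, one_div_mul_cancel hp0.ne', Real.rpow_one]
    _ ≤ ((#s : ℝ) ^ (1 / p - 1) * ∑ i ∈ s, f i) ^ p := by gcongr
    _ = (#s : ℝ) ^ (1 - p) * (∑ i ∈ s, f i) ^ p := by
        rw [Real.mul_rpow (by positivity) (sum_nonneg hf), ← Real.rpow_mul (by positivity)]
        congr 2
        field_simp

theorem sum_sum_abs_succ_sub_castSucc_rpow_le {ι : Type*} [Fintype ι] {p : ℝ} (hp0 : 0 < p)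
    (hp1 : p ≤ 1) {q : ℕ} {s : Fin (q + 1) → ι → ℝ} (hs : Monotone s) (hs0 : 0 ≤ s 0)
    {w : ι → ℝ} (hw : s (Fin.last q) ≤ w) :
    ∑ k : Fin q, ∑ i, |s k.succ i - s k.castSucc i| ^ p ≤ (q : ℝ) ^ (1 - p) * ∑ i, |w i| ^ p := by
  have hinc : ∀ (k : Fin q) i, 0 ≤ s k.succ i - s k.castSucc i := fun k i =>
    sub_nonneg.2 (hs (Fin.castSucc_le_succ k) i)
  rw [sum_comm, mul_sum]
  refine sum_le_sum fun i _ => ?_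
  have htel : ∑ k : Fin q, (s k.succ i - s k.castSucc i) ≤ |w i| := calc
    _ = s (Fin.last q) i - s 0 i := Fin.sum_univ_succ_sub_castSucc (s · i)
    _ ≤ |w i| := by linarith [show 0 ≤ s 0 i from hs0 i, hw i, le_abs_self (w i)]
  simp only [abs_of_nonneg (hinc _ i)]
  calc ∑ k : Fin q, (s k.succ i - s k.castSucc i) ^ p
      ≤ (q : ℝ) ^ (1 - p) * (∑ k : Fin q, (s k.succ i - s k.castSucc i)) ^ p := by
        simpa using Real.sum_rpow_le_const_mul_rpow_sum_of_le_one univ hp0 hp1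
          fun k _ => hinc k i
    _ ≤ (q : ℝ) ^ (1 - p) * |w i| ^ p := by
        gcongr
        exact sum_nonneg fun k _ => hinc k i

theorem lpNorm_rpow {p : ℝ} (hp : p ≠ 0) {n : ℕ} (v : Fin n → ℝ) :
    lpNorm p v ^ p = ∑ i, |v i| ^ p := by
  rw [lpNorm, ← Real.rpow_mul (sum_nonneg fun i _ => by positivity),
    one_div_mul_cancel hp, Real.rpow_one]

theorem rpow_mul_sum_abs_rpow_le_of_rpow_div_mul_lpNorm_le {p r ε : ℝ} (hp : 0 < p) (hε : 0 ≤ ε)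
    {n : ℕ} {v w : Fin n → ℝ} (h : ε ^ (r / p) * lpNorm p w ≤ lpNorm p v) :
    ε ^ r * ∑ i, |w i| ^ p ≤ ∑ i, |v i| ^ p := by
  have hw : 0 ≤ lpNorm p w := Real.rpow_nonneg (sum_nonneg fun i _ => by positivity) _
  have := Real.rpow_le_rpow (by positivity) h hp.le
  rwa [Real.mul_rpow (by positivity) hw, ← Real.rpow_mul hε, div_mul_cancel₀ _ hp.ne',
    lpNorm_rpow hp.ne', lpNorm_rpow hp.ne'] at this

theorem le_rpow_neg_div_of_mul_rpow_le_rpow_one_sub {p q r ε : ℝ} (hp : 0 < p) (hq : 0 < q)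
    (hε : 0 < ε) (h : q * ε ^ r ≤ q ^ (1 - p)) : q ≤ ε ^ (-(r / p)) := by
  have hqp : q ^ p ≤ ε ^ (-r) := by
    rw [Real.rpow_neg hε.le, ← one_div, le_div_iff₀ (by positivity)]
    calc q ^ p * ε ^ r = q ^ (p - 1) * (q * ε ^ r) := by
          rw [← mul_assoc, ← Real.rpow_add_one hq.ne']; ring_nf
      _ ≤ q ^ (p - 1) * q ^ (1 - p) := by gcongr
      _ = 1 := by rw [← Real.rpow_add hq]; norm_num
  calc q = (q ^ p) ^ (1 / p) := by
        rw [← Real.rpow_mul hq.le, mul_one_div_cancel hp.ne', Real.rpow_one]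
    _ ≤ (ε ^ (-r)) ^ (1 / p) := by gcongr
    _ = ε ^ (-(r / p)) := by rw [← Real.rpow_mul hε.le]; ring_nf

theorem stmt_14_general (p : ℝ) (hp0 : 0 < p) (hp1 : p ≤ 1) (n m q : ℕ) (hq : 0 < q) (ε : ℝ)
    (hε0 : 0 < ε)
    (x : ℕ → Fin n → ℝ)
    (hnn : ∀ i, 0 ≤ x 0 i)
    (hmono : ∀ s u : ℕ, s ≤ u → ∀ i, x s i ≤ x u i)
    (hxm : x m ≠ 0)
    (t : Fin q → ℕ) (ht : StrictMono t) (htm : ∀ k, t k ≤ m)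
    (h1 : ε ^ ((4 : ℝ) / p) * lpNorm p (x m) ≤ lpNorm p (x (t ⟨0, hq⟩)))
    (hstep : ∀ k : Fin q, ∀ hk : k.1 + 1 < q,
      ε ^ ((4 : ℝ) / p) * lpNorm p (x m) ≤ lpNorm p (x (t ⟨k.1 + 1, hk⟩) - x (t k))) :
    (q : ℝ) ≤ ε ^ (-((4 : ℝ) / p)) := by
  obtain ⟨r, rfl⟩ := Nat.exists_eq_add_one_of_ne_zero hq.ne'
  set S := ∑ i, |x m i| ^ p
  have hS : 0 < S := by
    obtain ⟨i, hi⟩ := Function.ne_iff.mp hxm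
    exact sum_pos' (fun j _ => by positivity)
      ⟨i, mem_univ i, Real.rpow_pos_of_pos (abs_pos.2 hi) p⟩
  have hx : Monotone x := fun a b hab => hmono a b hab
  set s : Fin (r + 2) → Fin n → ℝ := Fin.cons 0 (fun k => x (t k))
  have hs : Monotone s := Fin.monotone_iff_le_succ.2 <| Fin.cases
    (fun i => by simpa [s] using (hnn i).trans (hmono _ _ (Nat.zero_le _) i))
    fun k => by simpa [s, ← Fin.succ_castSucc] using hx (ht.monotone (Fin.castSucc_le_succ k))
  have hblock : ∀ k : Fin (r + 1), ε ^ (4 : ℝ) * S ≤ ∑ i, |s k.succ i - s k.castSucc i| ^ p := by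
    refine Fin.cases ?_ fun k => ?_
    · simpa [s] using rpow_mul_sum_abs_rpow_le_of_rpow_div_mul_lpNorm_le hp0 hε0.le h1
    · have hk : ε ^ ((4 : ℝ) / p) * lpNorm p (x m) ≤ lpNorm p (x (t k.succ) - x (t k.castSucc)) :=
        hstep k.castSucc (by simp)
      simpa [s, ← Fin.succ_castSucc] using
        rpow_mul_sum_abs_rpow_le_of_rpow_div_mul_lpNorm_le hp0 hε0.le hk
  have hcount := (sum_le_sum fun k _ => hblock k).trans <|
    sum_sum_abs_succ_sub_castSucc_rpow_le hp0 hp1 hs le_rfl (w := x m) ?_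
  · refine le_rpow_neg_div_of_mul_rpow_le_rpow_one_sub hp0 (by positivity) hε0 ?_
    simp only [sum_const, card_univ, Fintype.card_fin, nsmul_eq_mul] at hcount
    exact le_of_mul_le_mul_right (by simpa only [mul_assoc] using hcount) hS
  · simpa [s] using hx (htm (Fin.last r))

theorem stmt_14 (p : ℝ) (hp0 : 0 < p) (hp1 : p ≤ 1) (n m q : ℕ) (hq : 0 < q) (ε : ℝ)
    (hε0 : 0 < ε) (hε1 : ε < 1)
    (x : ℕ → Fin n → ℝ)
    (hnn : ∀ i, 0 ≤ x 0 i)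
    (hmono : ∀ s u : ℕ, s ≤ u → ∀ i, x s i ≤ x u i)
    (hxm : x m ≠ 0)
    (t : Fin q → ℕ) (ht : StrictMono t) (htm : ∀ k, t k ≤ m)
    (h1 : ε ^ ((4 : ℝ) / p) * lpNorm p (x m) ≤ lpNorm p (x (t ⟨0, hq⟩)))
    (hstep : ∀ k : Fin q, ∀ hk : k.1 + 1 < q,
      ε ^ ((4 : ℝ) / p) * lpNorm p (x m) ≤ lpNorm p (x (t ⟨k.1 + 1, hk⟩) - x (t k))) :
    (q : ℝ) ≤ ε ^ (-((4 : ℝ) / p)) :=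
  stmt_14_general p hp0 hp1 n m q hq ε hε0 x hnn hmono hxm t ht htm h1 hstep
end
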